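/- arXiv:2601.03264 — 2 statements merged into one kernel-verified Lean document; each statement's English description precedes it below -/
import Mathlib

section
/- Let k, n be positive integers and let x_0,...,x_n, y_0,...,y_n be elements of a field, not all zero. Then the k×2(n+k) banded matrix f (whose i-th row has y_n,...,y_0 in columns i,...,i+n of the first block of width n+k and -x_n,...,-x_0 in columns i,...,i+n of the second block, zeros elsewhere) has rank k, i.e. maximal rank. -/
/-- The matrix `f` of Lemma 3.1: `k × 2(n+k)`, whose `i`-th row has entries
`y_n, ..., y_0` in columns `i, ..., i+n` of the first block (of width `n+k`)
and `-x_n, ..., -x_0` in columns `i, ..., i+n` of the second block. -/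
def fMat (K : Type*) [Field K] (k n : ℕ) (x y : ℕ → K) :
    Matrix (Fin k) (Fin (2 * (n + k))) K := fun i c =>
  if (c : ℕ) < n + k then
    (if (i : ℕ) ≤ (c : ℕ) ∧ (c : ℕ) ≤ (i : ℕ) + n then y (n - ((c : ℕ) - (i : ℕ))) else 0)
  else
    (if (i : ℕ) + (n + k) ≤ (c : ℕ) ∧ (c : ℕ) ≤ (i : ℕ) + n + (n + k) then
      -(x (n - (((c : ℕ) - (n + k)) - (i : ℕ)))) else 0)

/-- Selecting columns of a matrix does not increase the rank. -/
lemma rank_col_select_le {K : Type*} [Field K] {k m : ℕ}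
    (A : Matrix (Fin k) (Fin m) K) (g : Fin k → Fin m) :
    (A.submatrix id g).rank ≤ A.rank := by
  have hP : A.submatrix id g = A * (Matrix.of fun (c : Fin m) (j : Fin k) =>
      if c = g j then (1 : K) else 0) := by
    ext i j
    simp [Matrix.mul_apply, Matrix.submatrix_apply, mul_ite, mul_one, mul_zero]
  rw [hP]
  exact Matrix.rank_mul_le_left _ _

/-- If one can select columns making an upper-triangular square submatrix with
nonzero diagonal, the matrix has full row rank. -/
lemma rank_eq_of_triangular {K : Type*} [Field K] {k m : ℕ}
    (A : Matrix (Fin k) (Fin m) K) (g : Fin k → Fin m)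
    (h0 : ∀ i j : Fin k, j < i → A i (g j) = 0)
    (hd : ∀ i : Fin k, A i (g i) ≠ 0) : A.rank = k := by
  have ht : Matrix.BlockTriangular (A.submatrix id g) id := fun i j hij => h0 i j hij
  have hdet : (A.submatrix id g).det ≠ 0 := by
    rw [Matrix.det_of_upperTriangular ht]
    exact Finset.prod_ne_zero_iff.mpr fun i _ => hd i
  have hB : (A.submatrix id g).rank = k := by
    rw [Matrix.rank_of_isUnit _ (Matrix.isUnit_iff_isUnit_det _ |>.mpr
      (isUnit_iff_ne_zero.mpr hdet))]
    simp
  refine le_antisymm ?_ ?_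
  · simpa using A.rank_le_card_height
  · exact le_trans (le_of_eq hB.symm) (rank_col_select_le A g)

/-- Lemma 3.1(2) for `f`: if the scalars `x_0, ..., x_n, y_0, ..., y_n` are not
all zero, then `f` has maximal rank `k`. -/
theorem stmt2 (K : Type*) [Field K] (k n : ℕ) (hk : 0 < k) (hn : 0 < n)
    (x y : ℕ → K) (hxy : ∃ i ≤ n, x i ≠ 0 ∨ y i ≠ 0) :
    (fMat K k n x y).rank = k := by
  by_cases hy : ∃ t ≤ n, y (n - t) ≠ 0
  · -- use the y-block
    have hex : ∃ t, t ≤ n ∧ y (n - t) ≠ 0 := by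
      obtain ⟨t, ht, h⟩ := hy; exact ⟨t, ht, h⟩
    classical
    set d := Nat.find hex with hdd
    obtain ⟨hdn, hyd⟩ := Nat.find_spec hex
    have hmin : ∀ t < d, y (n - t) = 0 := by
      intro t ht
      have := Nat.find_min hex ht
      push_neg at this
      exact this (le_trans (le_of_lt (lt_of_lt_of_le ht hdn)) le_rfl)
    refine rank_eq_of_triangular _ (fun i => ⟨(i : ℕ) + d, by omega⟩) ?_ ?_
    · intro i j hij
      have hij' : (j : ℕ) < (i : ℕ) := hij
      simp only [fMat]
      have hc : (j : ℕ) + d < n + k := by omega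
      rw [if_pos hc]
      by_cases hcond : (i : ℕ) ≤ (j : ℕ) + d ∧ (j : ℕ) + d ≤ (i : ℕ) + n
      · rw [if_pos hcond]
        exact hmin _ (by omega)
      · rw [if_neg hcond]
    · intro i
      simp only [fMat]
      have hc : (i : ℕ) + d < n + k := by omega
      rw [if_pos hc, if_pos ⟨by omega, by omega⟩]
      have : (i : ℕ) + d - (i : ℕ) = d := by omega
      rw [this]
      exact hyd
  · -- all y's in range vanish; use the x-block
    push_neg at hy
    have hex : ∃ t, t ≤ n ∧ x (n - t) ≠ 0 := by
      obtain ⟨j, hj, hx | hy'⟩ := hxy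
      · exact ⟨n - j, by omega, by rwa [show n - (n - j) = j by omega]⟩
      · exact absurd (hy (n - j) (by omega)) (by rwa [show n - (n - j) = j by omega])
    classical
    set d := Nat.find hex with hdd
    obtain ⟨hdn, hxd⟩ := Nat.find_spec hex
    have hmin : ∀ t < d, x (n - t) = 0 := by
      intro t ht
      have := Nat.find_min hex ht
      push_neg at this
      exact this (by omega)
    refine rank_eq_of_triangular _ (fun i => ⟨(i : ℕ) + d + (n + k), by omega⟩) ?_ ?_
    · intro i j hij
      have hij' : (j : ℕ) < (i : ℕ) := hij
      simp only [fMat]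
      have hc : ¬ ((j : ℕ) + d + (n + k) < n + k) := by omega
      rw [if_neg hc]
      by_cases hcond : (i : ℕ) + (n + k) ≤ (j : ℕ) + d + (n + k) ∧
          (j : ℕ) + d + (n + k) ≤ (i : ℕ) + n + (n + k)
      · rw [if_pos hcond]
        have : (j : ℕ) + d + (n + k) - (n + k) - (i : ℕ) = (j : ℕ) + d - (i : ℕ) := by omega
        rw [this, hmin _ (by omega), neg_zero]
      · rw [if_neg hcond]
    · intro i
      simp only [fMat]
      have hc : ¬ ((i : ℕ) + d + (n + k) < n + k) := by omega
      rw [if_neg hc, if_pos ⟨by omega, by omega⟩]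
      have : (i : ℕ) + d + (n + k) - (n + k) - (i : ℕ) = d := by omega
      rw [this]
      exact neg_ne_zero.mpr hxd
end

section
/- Let 0 → A → K → E → 0 be a short exact sequence of vector bundles on a projective variety X with A = O_X(-α)^{⊕k} a sum of copies of a line bundle, and suppose H^0(X, K^* ⊗ O_X(-α)) = H^1(X, K^* ⊗ O_X(-α)) = 0 and K is simple (h^0(K ⊗ K^*) = 1). Then E is simple: h^0(X, E ⊗ E^*) = 1. -/
open CategoryTheory CategoryTheory.Limits

section Aux

variable {C : Type} [Category C] [Abelian C] [HasFiniteBiproducts C]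

/-- Pullback of a short exact sequence along an arbitrary morphism is short exact. -/
lemma aux_pullback_shortExact {X M N K : C} (q : M ⟶ N) [Epi q] (u : X ⟶ M)
    (hu0 : u ≫ q = 0) (hu : IsLimit (KernelFork.ofι u hu0)) (r : K ⟶ N) :
    (ShortComplex.mk (pullback.lift u 0 (by rw [hu0, zero_comp]) : X ⟶ pullback q r)
      (pullback.snd q r) (pullback.lift_snd _ _ _)).ShortExact := by
  haveI hmu : Mono u := mono_of_isLimit_fork hu
  have hw : u ≫ q = 0 ≫ r := by rw [hu0, zero_comp]
  have hjf : (pullback.lift u 0 hw) ≫ pullback.fst q r = u := pullback.lift_fst _ _ _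
  haveI hmono : Mono (pullback.lift u 0 hw) := by
    have : Mono ((pullback.lift u 0 hw) ≫ pullback.fst q r) := by
      rw [hjf]; infer_instance
    exact mono_of_mono _ (pullback.fst q r)
  have hlim : IsLimit (KernelFork.ofι (pullback.lift u 0 hw)
      (pullback.lift_snd u 0 hw : (pullback.lift u 0 hw) ≫ pullback.snd q r = 0)) := by
    apply KernelFork.IsLimit.ofι'
    intro T t ht
    have h1 : (t ≫ pullback.fst q r) ≫ q = 0 := by
      rw [Category.assoc, pullback.condition, ← Category.assoc, ht, zero_comp]
    obtain ⟨l, hl⟩ := KernelFork.IsLimit.lift' hu (t ≫ pullback.fst q r) h1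
    refine ⟨l, ?_⟩
    apply pullback.hom_ext
    · rw [Category.assoc, hjf]; exact hl
    · rw [Category.assoc, pullback.lift_snd, comp_zero, ht]
  exact { exact := ShortComplex.exact_of_f_is_kernel _ hlim }

/-- Short exactness is preserved by precomposing the injection with an isomorphism. -/
lemma aux_iso_shortExact {X X' M K : C} (e : X' ≅ X) (u : X ⟶ M) (v : M ⟶ K) (w : u ≫ v = 0)
    (h : (ShortComplex.mk u v w).ShortExact) :
    (ShortComplex.mk (e.hom ≫ u) v (by rw [Category.assoc, w, comp_zero])).ShortExact := by
  haveI := h.mono_f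
  haveI := h.epi_g
  haveI : Mono ((ShortComplex.mk u v w).f) := h.mono_f
  haveI : Mono (e.hom ≫ u) := mono_comp _ _
  refine { exact := ?_ }
  rw [ShortComplex.exact_iff_exact_up_to_refinements]
  intro T t ht
  obtain ⟨T', π, hπ, x₁, hx⟩ := h.exact.exact_up_to_refinements t ht
  exact ⟨T', π, hπ, x₁ ≫ e.inv, by
    show π ≫ t = (x₁ ≫ e.inv) ≫ (e.hom ≫ u)
    rw [hx]; simp⟩

/-- If every extension of `K` by `L` splits, then every extension of `K` by a finite
biproduct of copies of `L` splits. -/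
lemma aux_split (L K : C)
    (hsplit : ∀ (M : C) (u : L ⟶ M) (v : M ⟶ K) (w' : u ≫ v = 0),
      (ShortComplex.mk u v w').ShortExact → ∃ r : K ⟶ M, r ≫ v = 𝟙 K) :
    ∀ (n : ℕ) (M : C) (u : (⨁ fun _ : Fin n => L) ⟶ M) (v : M ⟶ K) (w' : u ≫ v = 0),
      (ShortComplex.mk u v w').ShortExact → ∃ r : K ⟶ M, r ≫ v = 𝟙 K := by
  intro n
  induction n with
  | zero =>
    intro M u v w' h
    haveI := h.epi_g
    haveI hev : Epi v := h.epi_g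
    have hu : u = 0 := by
      have hid : 𝟙 (⨁ fun _ : Fin 0 => L) = 0 := by
        rw [← biproduct.total]; simp
      rw [← Category.id_comp u, hid, zero_comp]
    haveI hmv : Mono v := h.exact.mono_g hu
    haveI : IsIso v := isIso_of_mono_of_epi v
    exact ⟨inv v, IsIso.inv_hom_id v⟩
  | succ n ih =>
    intro M u v w' h
    haveI hmu : Mono u := h.mono_f
    haveI hev : Epi v := h.epi_g
    set u₁ : L ⟶ M := biproduct.ι (fun _ : Fin (n+1) => L) 0 ≫ u with hu₁
    haveI hmu₁ : Mono u₁ := by rw [hu₁]; exact mono_comp _ _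
    set u₂ : (⨁ fun _ : Fin n => L) ⟶ M :=
      biproduct.desc (fun j => biproduct.ι (fun _ : Fin (n+1) => L) j.succ ≫ u) with hu₂
    set c : (⨁ fun _ : Fin (n+1) => L) ⟶ ⨁ fun _ : Fin n => L :=
      biproduct.lift (fun j => biproduct.π (fun _ : Fin (n+1) => L) j.succ) with hc
    set d : (⨁ fun _ : Fin n => L) ⟶ ⨁ fun _ : Fin (n+1) => L :=
      biproduct.desc (fun j => biproduct.ι (fun _ : Fin (n+1) => L) j.succ) with hd
    have hdu : d ≫ u = u₂ := by
      apply biproduct.hom_ext'; intro j; simp [hd, hu₂]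
    have hstar : u = biproduct.π (fun _ : Fin (n+1) => L) 0 ≫ u₁ + c ≫ u₂ := by
      calc u = (∑ j : Fin (n+1), biproduct.π (fun _ : Fin (n+1) => L) j
              ≫ biproduct.ι (fun _ : Fin (n+1) => L) j) ≫ u := by
            rw [biproduct.total, Category.id_comp]
        _ = ∑ j : Fin (n+1), biproduct.π (fun _ : Fin (n+1) => L) j
              ≫ (biproduct.ι (fun _ : Fin (n+1) => L) j ≫ u) := by
            rw [Preadditive.sum_comp]; simp [Category.assoc]
        _ = biproduct.π (fun _ : Fin (n+1) => L) 0 ≫ u₁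
              + ∑ j : Fin n, biproduct.π (fun _ : Fin (n+1) => L) j.succ
              ≫ (biproduct.ι (fun _ : Fin (n+1) => L) j.succ ≫ u) := by
            rw [Fin.sum_univ_succ]
        _ = biproduct.π (fun _ : Fin (n+1) => L) 0 ≫ u₁ + c ≫ u₂ := by
            rw [hc, hu₂, biproduct.lift_desc]
    set N := cokernel u₁ with hN
    set q : M ⟶ N := cokernel.π u₁ with hq
    haveI : Epi q := by rw [hq]; infer_instance
    have hu₁q : u₁ ≫ q = 0 := by rw [hq]; exact cokernel.condition u₁
    have hu₁v : u₁ ≫ v = 0 := by rw [hu₁, Category.assoc, w', comp_zero]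
    set v' : N ⟶ K := cokernel.desc u₁ v hu₁v with hv'
    have hqv : q ≫ v' = v := by rw [hq, hv']; exact cokernel.π_desc _ _ _
    have hSE1 : (ShortComplex.mk u₁ q hu₁q).Exact := by
      apply ShortComplex.exact_of_g_is_cokernel
      exact cokernelIsCokernel u₁
    haveI : Mono ((ShortComplex.mk u₁ q hu₁q).f) := hmu₁
    have hker : IsLimit (KernelFork.ofι u₁ hu₁q) := hSE1.fIsKernel
    -- the quotient short exact sequence 0 → ⊕ⁿL → N → K → 0
    have hw2 : (u₂ ≫ q) ≫ v' = 0 := by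
      rw [Category.assoc, hqv, ← hdu, Category.assoc, w', comp_zero]
    haveI hm2 : Mono (u₂ ≫ q) := by
      rw [Preadditive.mono_iff_cancel_zero]
      intro T t ht
      rw [← Category.assoc] at ht
      obtain ⟨s, hs⟩ := KernelFork.IsLimit.lift' hker (t ≫ u₂) ht
      have hs' : s ≫ u₁ = t ≫ u₂ := hs
      have hsd : s ≫ biproduct.ι (fun _ : Fin (n+1) => L) 0 = t ≫ d := by
        rw [← cancel_mono u, Category.assoc, Category.assoc, hdu, ← hu₁]
        exact hs'
      apply biproduct.hom_ext
      intro j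
      have hdπ : d ≫ biproduct.π (fun _ : Fin (n+1) => L) j.succ
          = biproduct.π (fun _ : Fin n => L) j := by
        apply biproduct.hom_ext'
        intro i
        rw [hd, biproduct.ι_desc_assoc]
        by_cases hij : i = j
        · subst hij; simp
        · rw [biproduct.ι_π_ne _ (fun hh => hij (Fin.succ_injective _ hh)),
            biproduct.ι_π_ne _ hij]
      rw [zero_comp, ← hdπ, ← Category.assoc, ← hsd, Category.assoc,
        biproduct.ι_π_ne _ (Fin.succ_ne_zero j).symm, comp_zero]
    haveI he2 : Epi v' := by
      have : Epi (q ≫ v') := by rw [hqv]; exact hev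
      exact epi_of_epi q v'
    have hSE2 : (ShortComplex.mk (u₂ ≫ q) v' hw2).ShortExact := by
      refine { exact := ?_ }
      rw [ShortComplex.exact_iff_exact_up_to_refinements]
      intro T t ht
      have hm : pullback.snd t q ≫ v = 0 := by
        rw [← hqv, ← Category.assoc, ← pullback.condition, Category.assoc, ht, comp_zero]
      obtain ⟨T'', π₂, hπ₂, b, hb⟩ := h.exact.exact_up_to_refinements (pullback.snd t q) hm
      have h0 : biproduct.ι (fun _ : Fin (n+1) => L) 0 ≫ u ≫ q = 0 := by
        rw [← Category.assoc]; exact hu₁q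
      have huq : u ≫ q = c ≫ (u₂ ≫ q) := by
        rw [hstar]
        simp only [Preadditive.add_comp, Category.assoc, hu₁, h0, comp_zero, zero_add]
      refine ⟨T'', π₂ ≫ pullback.fst t q, epi_comp _ _, b ≫ c, ?_⟩
      show (π₂ ≫ pullback.fst t q) ≫ t = (b ≫ c) ≫ (u₂ ≫ q)
      calc (π₂ ≫ pullback.fst t q) ≫ t = π₂ ≫ pullback.snd t q ≫ q := by
            rw [Category.assoc, pullback.condition]
        _ = (π₂ ≫ pullback.snd t q) ≫ q := by rw [Category.assoc]
        _ = b ≫ u ≫ q := by rw [hb, Category.assoc]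
        _ = (b ≫ c) ≫ (u₂ ≫ q) := by rw [huq, Category.assoc]
    obtain ⟨r', hr'⟩ := ih N (u₂ ≫ q) v' hw2 hSE2
    -- pull back q along r' and use the splitting hypothesis for L
    have hPse := aux_pullback_shortExact q u₁ hu₁q hker r'
    obtain ⟨r'', hr''⟩ := hsplit (pullback q r') _ _ _ hPse
    refine ⟨r'' ≫ pullback.fst q r', ?_⟩
    calc (r'' ≫ pullback.fst q r') ≫ v = r'' ≫ pullback.fst q r' ≫ q ≫ v' := by
          rw [Category.assoc, hqv]
      _ = r'' ≫ pullback.snd q r' ≫ r' ≫ v' := by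
          rw [← Category.assoc (pullback.fst q r'), pullback.condition, Category.assoc]
      _ = 𝟙 K := by rw [hr', Category.comp_id]; exact hr''

end Aux

/-- The abstract core of Lemma 3.4 of the paper.  Let `0 → A → K → E → 0` be a
short exact sequence of vector bundles on a projective variety `X` (modelled by
objects of a `𝕜`-linear abelian category `C`), with `A ≅ O_X(-α)^{⊕k}` a sum of
`k` copies of a line bundle `Lneg = O_X(-α)`.  Assume:
* `H^0(X, K^* ⊗ O_X(-α)) = Hom(K, O_X(-α)) = 0`;
* `H^1(X, K^* ⊗ O_X(-α)) = Ext^1(K, O_X(-α)) = 0`, encoded by the splitting of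
  every extension of `K` by `Lneg`;
* `K` is simple: `h^0(K ⊗ K^*) = dim Hom(K, K) = 1`.
Then `E` is simple: `h^0(X, E ⊗ E^*) = dim Hom(E, E) = 1`. -/
theorem stmt16 (𝕜 : Type) [Field 𝕜]
    (C : Type) [Category C] [Abelian C] [Linear 𝕜 C] [HasFiniteBiproducts C]
    (k : ℕ) (hk : 0 < k) (Lneg A K E : C)
    (hA : A ≅ ⨁ (fun _ : Fin k => Lneg))
    (i : A ⟶ K) (p : K ⟶ E) (w : i ≫ p = 0)
    (hse : (ShortComplex.mk i p w).ShortExact)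
    (h0van : ∀ f : K ⟶ Lneg, f = 0)
    (h1van : ∀ (M : C) (u : Lneg ⟶ M) (v : M ⟶ K) (w' : u ≫ v = 0),
      (ShortComplex.mk u v w').ShortExact → ∃ r : K ⟶ M, r ≫ v = 𝟙 K)
    (hKsimple : Module.finrank 𝕜 (K ⟶ K) = 1) :
    Module.finrank 𝕜 (E ⟶ E) = 1 := by
  haveI := hse.mono_f
  haveI : Mono i := hse.mono_f
  haveI := hse.epi_g
  haveI : Epi p := hse.epi_g
  have hker : IsLimit (KernelFork.ofι i w) := hse.exact.fIsKernel
  -- surjectivity of `- ≫ p : Hom(K,K) → Hom(K,E)`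
  have hsurj : ∀ f : K ⟶ E, ∃ g : K ⟶ K, g ≫ p = f := by
    intro f
    have hPse := aux_pullback_shortExact p i w hker f
    have hPse' := aux_iso_shortExact hA.symm _ _ _ hPse
    obtain ⟨r, hr⟩ := aux_split Lneg K h1van k (pullback p f) _ _ _ hPse'
    refine ⟨r ≫ pullback.fst p f, ?_⟩
    rw [Category.assoc, pullback.condition, ← Category.assoc, hr, Category.id_comp]
  -- injectivity of `- ≫ p`
  have hinj : ∀ g : K ⟶ K, g ≫ p = 0 → g = 0 := by
    intro g hg
    obtain ⟨l, hl⟩ := KernelFork.IsLimit.lift' hker g hg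
    have hl' : l ≫ i = g := hl
    have hlz : l ≫ hA.hom = 0 := by
      apply biproduct.hom_ext
      intro j
      rw [zero_comp, Category.assoc]
      exact h0van _
    have hfac : l = (l ≫ hA.hom) ≫ hA.inv := by
      rw [Category.assoc, Iso.hom_inv_id, Category.comp_id]
    have : l = 0 := by rw [hfac, hlz, zero_comp]
    rw [← hl', this, zero_comp]
  -- the identity of `E` is nonzero
  have hE : (𝟙 E : E ⟶ E) ≠ 0 := by
    intro h0
    have hp0 : p = 0 := by rw [← Category.comp_id p, h0, comp_zero]
    haveI hei : Epi i := hse.exact.epi_f hp0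
    haveI : IsIso i := isIso_of_mono_of_epi i
    have h1 : inv i ≫ hA.hom = 0 := by
      apply biproduct.hom_ext
      intro j
      rw [zero_comp, Category.assoc]
      exact h0van _
    have h2 : (𝟙 K : K ⟶ K) = 0 := by
      have hinvi : inv i = 0 := by
        have hfac : inv i = (inv i ≫ hA.hom) ≫ hA.inv := by
          rw [Category.assoc, Iso.hom_inv_id, Category.comp_id]
        rw [hfac, h1, zero_comp]
      rw [← IsIso.inv_hom_id i, hinvi, zero_comp]
    have hsub : Subsingleton (K ⟶ K) :=
      ⟨fun a b => by rw [← Category.comp_id a, ← Category.comp_id b, h2, comp_zero, comp_zero]⟩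
    rw [Module.finrank_zero_of_subsingleton] at hKsimple
    exact zero_ne_one hKsimple
  -- linear algebra
  let Φ : (K ⟶ K) →ₗ[𝕜] (K ⟶ E) := Linear.rightComp 𝕜 K p
  have hΦbij : Function.Bijective Φ := by
    constructor
    · intro a b hab
      have hab' : (a - b) ≫ p = 0 := by
        rw [Preadditive.sub_comp]
        have : a ≫ p = b ≫ p := hab
        rw [this, sub_self]
      have := hinj _ hab'
      exact sub_eq_zero.mp this
    · intro f
      obtain ⟨g, hg⟩ := hsurj f
      exact ⟨g, hg⟩
  let e₁ : (K ⟶ K) ≃ₗ[𝕜] (K ⟶ E) := LinearEquiv.ofBijective Φ hΦbij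
  have hfr : Module.finrank 𝕜 (K ⟶ E) = 1 := by rw [← e₁.finrank_eq, hKsimple]
  haveI : FiniteDimensional 𝕜 (K ⟶ K) :=
    FiniteDimensional.of_finrank_pos (by rw [hKsimple]; norm_num)
  haveI : FiniteDimensional 𝕜 (K ⟶ E) := Module.Finite.equiv e₁
  let Ψ : (E ⟶ E) →ₗ[𝕜] (K ⟶ E) := Linear.leftComp 𝕜 E p
  have hΨinj : Function.Injective Ψ := by
    intro a b hab
    have hab' : p ≫ a = p ≫ b := hab
    exact (cancel_epi p).mp hab'
  haveI : FiniteDimensional 𝕜 (E ⟶ E) := FiniteDimensional.of_injective Ψ hΨinj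
  have h1 : Module.finrank 𝕜 (E ⟶ E) ≤ 1 := by
    rw [← hfr]
    exact LinearMap.finrank_le_finrank_of_injective hΨinj
  have h2 : 0 < Module.finrank 𝕜 (E ⟶ E) := by
    rw [Module.finrank_pos_iff_exists_ne_zero]
    exact ⟨𝟙 E, hE⟩
  omega
end
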